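/- arXiv:1510.08044 — 6 statements merged into one kernel-verified Lean document; each statement's English description precedes it below -/
import Mathlib

section
/- If X is a pretopological space and F is a pretopologically open filter on X (i.e., F ∈ F implies inh F ∈ F), then the adherence of F with respect to the pretopology equals the adherence of F with respect to the partial regularization rπ. -/
open Set Filter

/-- A pretopological space: a vicinity filter at each point containing the point. -/
structure Pretop (X : Type*) where
  V : X → Filter X
  pure_le : ∀ x : X, (pure x : Filter X) ≤ V x

/-- Two filters meet (`F # G`). -/
def Meets {X : Type*} (F G : Filter X) : Prop :=
  ∀ A ∈ F, ∀ B ∈ G, (A ∩ B).Nonempty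

namespace Pretop

variable {X Y : Type*} (π : Pretop X)

/-- Convergence: `F → x` iff `F ⊇ V x`. -/
def Conv (F : Filter X) (x : X) : Prop := F ≤ π.V x

/-- Adherence of a filter. -/
def adh (F : Filter X) : Set X := {x | Meets (π.V x) F}

/-- Adherence of a set (adherence of its principal filter). -/
def adhS (A : Set X) : Set X := {x | ∀ U ∈ π.V x, (U ∩ A).Nonempty}

/-- Inherence of a set. -/
def inh (A : Set X) : Set X := (π.adhS Aᶜ)ᶜ

/-- A compact pretopological space: every proper filter has nonempty adherence. -/
def IsCompactPre : Prop := ∀ F : Filter X, F.NeBot → (π.adh F).Nonempty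

/-- Hausdorff: distinct points have disjoint vicinities. -/
def HausdorffPre : Prop :=
  ∀ x y : X, x ≠ y → ∃ U ∈ π.V x, ∃ W ∈ π.V y, U ∩ W = ∅

/-- `F` is compact at `A`: every filter meeting `F` has adherence meeting `A`. -/
def CompactAt (F : Filter X) (A : Set X) : Prop :=
  ∀ G : Filter X, Meets G F → (π.adh G ∩ A).Nonempty

/-- A cover of `A`: every point of `A` has a member of `C` as a vicinity. -/
def IsCover (C : Set (Set X)) (A : Set X) : Prop :=
  ∀ x ∈ A, ∃ U ∈ C, U ∈ π.V x

/-- Cover-compactness. -/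
def CoverCompact (A : Set X) : Prop :=
  ∀ C : Set (Set X), π.IsCover C A →
    ∃ D : Finset (Set X), ↑D ⊆ C ∧ A ⊆ π.inh (⋃ U ∈ D, U)

lemma mem_of_vicinity {x : X} {U : Set X} (h : U ∈ π.V x) : x ∈ U := π.pure_le x h

lemma subset_adhS (A : Set X) : A ⊆ π.adhS A :=
  fun x hx U hU => ⟨x, π.mem_of_vicinity hU, hx⟩

lemma adhS_mono {A B : Set X} (h : A ⊆ B) : π.adhS A ⊆ π.adhS B :=
  fun x hx U hU => (hx U hU).imp fun y hy => ⟨hy.1, h hy.2⟩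

lemma adhS_empty : π.adhS (∅ : Set X) = ∅ := by
  ext x
  simp only [adhS, mem_setOf_eq, Set.inter_empty, Set.mem_empty_iff_false, iff_false]
  intro h
  simpa using h univ univ_mem

lemma adhS_union (A B : Set X) : π.adhS (A ∪ B) = π.adhS A ∪ π.adhS B := by
  apply Subset.antisymm
  · intro x hx
    by_contra hc
    simp only [Set.mem_union, not_or] at hc
    obtain ⟨h1, h2⟩ := hc
    simp only [adhS, mem_setOf_eq, not_forall] at h1 h2
    obtain ⟨U, hU, hUA⟩ := h1
    obtain ⟨W, hW, hWB⟩ := h2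
    obtain ⟨z, hz⟩ := hx (U ∩ W) (inter_mem hU hW)
    rcases hz.2 with hA | hB
    · exact hUA ⟨z, hz.1.1, hA⟩
    · exact hWB ⟨z, hz.1.2, hB⟩
  · exact Set.union_subset (π.adhS_mono Set.subset_union_left)
      (π.adhS_mono Set.subset_union_right)

lemma inh_mono {A B : Set X} (h : A ⊆ B) : π.inh A ⊆ π.inh B :=
  Set.compl_subset_compl.mpr (π.adhS_mono (Set.compl_subset_compl.mpr h))

lemma inh_inter (A B : Set X) : π.inh (A ∩ B) = π.inh A ∩ π.inh B := by
  simp only [inh, Set.compl_inter, adhS_union, Set.compl_union]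

lemma inh_univ : π.inh (univ : Set X) = univ := by
  simp [inh, adhS_empty]

lemma inh_subset (A : Set X) : π.inh A ⊆ A := by
  intro x hx
  by_contra hxA
  exact hx (π.subset_adhS Aᶜ hxA)

/-- The filter `F¹` of members of `F` whose inherence also belongs to `F`. -/
def F1 (F : Filter X) : Filter X where
  sets := {A | A ∈ F ∧ π.inh A ∈ F}
  univ_sets := ⟨univ_mem, by rw [π.inh_univ]; exact univ_mem⟩
  sets_of_superset := fun hA hAB =>
    ⟨mem_of_superset hA.1 hAB, mem_of_superset hA.2 (π.inh_mono hAB)⟩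
  inter_sets := fun hA hB =>
    ⟨inter_mem hA.1 hB.1, by rw [π.inh_inter]; exact inter_mem hA.2 hB.2⟩

lemma mem_F1 {F : Filter X} {A : Set X} : A ∈ π.F1 F ↔ A ∈ F ∧ π.inh A ∈ F := Iff.rfl

/-- The partial regularization `rπ`: vicinities generated by adherences of vicinities. -/
def rpre : Pretop X where
  V x := (π.V x).lift' π.adhS
  pure_le x := le_lift'.mpr fun U hU =>
    mem_pure.mpr (π.subset_adhS U (π.mem_of_vicinity hU))

lemma mem_rpre {x : X} {A : Set X} :
    A ∈ (π.rpre).V x ↔ ∃ U ∈ π.V x, π.adhS U ⊆ A :=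
  mem_lift'_sets fun _ _ h => π.adhS_mono h

end Pretop

/-- Continuity of maps between pretopological spaces. -/
def ContPre {X Y : Type*} (π : Pretop X) (τ : Pretop Y) (f : X → Y) : Prop :=
  ∀ x : X, ∀ W ∈ τ.V (f x), ∃ U ∈ π.V x, f '' U ⊆ W

/-- Perfect maps between pretopological spaces. -/
def PerfectPre {X Y : Type*} (π : Pretop X) (τ : Pretop Y) (f : X → Y) : Prop :=
  ∀ (F : Filter Y) (y : Y), τ.Conv F y → π.CompactAt (F.comap f) (f ⁻¹' {y})

/-- The filter of vicinities of a set `A`. -/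
def VSet {X : Type*} (π : Pretop X) (A : Set X) : Filter X where
  sets := {V | A ⊆ π.inh V}
  univ_sets := by simp [π.inh_univ]
  sets_of_superset := fun h hsub => h.trans (π.inh_mono hsub)
  inter_sets := fun h1 h2 => by
    rw [Set.mem_setOf_eq, π.inh_inter]; exact Set.subset_inter h1 h2

lemma mem_VSet {X : Type*} {π : Pretop X} {A V : Set X} :
    V ∈ VSet π A ↔ A ⊆ π.inh V := Iff.rfl

/-- `f^#[A] = {y : f⁻¹(y) ⊆ A}`. -/
def fsharp {X Y : Type*} (f : X → Y) (A : Set X) : Set Y := {y | f ⁻¹' {y} ⊆ A}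

/-- The θ-quotient pretopology on `Y`. -/
def thetaQuot {X Y : Type*} (π : Pretop X) (f : X → Y) : Pretop Y where
  V y := (VSet π (f ⁻¹' {y})).lift' (fsharp f)
  pure_le y := le_lift'.mpr fun V hV =>
    mem_pure.mpr (fun x hx => π.inh_subset V ((mem_VSet.mp hV) hx))

/-- Strong irreducibility. -/
def StronglyIrreducible {X Y : Type*} (π : Pretop X) (f : X → Y) : Prop :=
  ∀ U V : Set X, (π.inh U).Nonempty → (π.inh V).Nonempty → (U ∩ V).Nonempty →
    ∃ y : Y, f ⁻¹' {y} ⊆ U ∩ V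

/-- The simple extension `Y⁺` determined by a dense subset `S`. -/
def extPlus {X : Type*} (ρ : Pretop X) (S : Set X) : Pretop X where
  V p := (ρ.V p).lift' (fun W => insert p (W ∩ S))
  pure_le p := le_lift'.mpr fun W _ => mem_pure.mpr (Set.mem_insert p _)

/-- `o(A) = {p : ∃ W ∈ V(p), W ∩ S = A}`. -/
def oSet {X : Type*} (ρ : Pretop X) (S : Set X) (A : Set X) : Set X :=
  {p | ∃ W ∈ ρ.V p, W ∩ S = A}

/-- The strict extension `Y^#` determined by a dense subset `S`. -/
def extSharp {X : Type*} (ρ : Pretop X) (S : Set X) : Pretop X where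
  V p := (ρ.V p).lift' (fun W => oSet ρ S (W ∩ S))
  pure_le p := le_lift'.mpr fun W hW => mem_pure.mpr ⟨W, hW, rfl⟩

/-- The θ-pretopology of a topological space: vicinities are closed neighborhoods. -/
def theta (X : Type*) [TopologicalSpace X] : Pretop X where
  V x := (nhds x).lift' closure
  pure_le x := le_lift'.mpr fun U hU =>
    mem_pure.mpr (subset_closure (mem_of_mem_nhds hU))

/-! Every vicinity `U` lies in `adh U`, so `rπ` is coarser than `π` and the inclusion `⊆` holds
for any filter. Conversely, if `U ∈ V(x)` and `B ∈ F`, openness of `F` puts `inh B` in `F`, so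
`adh U` meets `inh B` at some `z`; a vicinity of `z` inside `B` then meets `U`. -/

lemma Meets.mono_left {X : Type*} {F F' G : Filter X} (h : Meets F G) (hF : F ≤ F') :
    Meets F' G :=
  fun A hA B hB => h A (hF hA) B hB

namespace Pretop

variable {X : Type*} (π : Pretop X)

lemma V_le_rpre_V (x : X) : π.V x ≤ π.rpre.V x :=
  le_lift'.mpr fun U hU => mem_of_superset hU (π.subset_adhS U)

lemma exists_vicinity_subset_of_mem_inh {x : X} {B : Set X} (hx : x ∈ π.inh B) :
    ∃ W ∈ π.V x, W ⊆ B := by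
  simpa only [inh, adhS, mem_compl_iff, mem_ofPred_eq, not_forall, not_nonempty_iff_eq_empty,
    ← sdiff_eq, sdiff_eq_empty, exists_prop] using hx

lemma inter_nonempty_of_adhS_inter_inh {U B : Set X} (h : (π.adhS U ∩ π.inh B).Nonempty) :
    (U ∩ B).Nonempty := by
  obtain ⟨z, hzU, hzB⟩ := h
  obtain ⟨W, hW, hWB⟩ := π.exists_vicinity_subset_of_mem_inh hzB
  obtain ⟨w, hwW, hwU⟩ := hzU W hW
  exact ⟨w, hwU, hWB hwW⟩

lemma adh_subset_adh_rpre (F : Filter X) : π.adh F ⊆ π.rpre.adh F :=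
  fun x hx => Meets.mono_left hx (π.V_le_rpre_V x)

lemma adh_rpre_subset_adh {F : Filter X} (hF : ∀ B ∈ F, π.inh B ∈ F) :
    π.rpre.adh F ⊆ π.adh F := by
  intro x hx U hU B hB
  have hadhU : π.adhS U ∈ π.rpre.V x := π.mem_rpre.mpr ⟨U, hU, subset_rfl⟩
  exact π.inter_nonempty_of_adhS_inter_inh (hx _ hadhU _ (hF B hB))

end Pretop

/-- If `F` is a pretopologically open filter on a pretopological space, then its
π-adherence equals its adherence with respect to the partial regularization `rπ`. -/
theorem adh_eq_adh_rpre_of_open {X : Type*} (π : Pretop X) (F : Filter X)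
    (hF : ∀ A ∈ F, π.inh A ∈ F) :
    π.adh F = (π.rpre).adh F :=
  (π.adh_subset_adh_rpre F).antisymm (π.adh_rpre_subset_adh hF)
end

section
/- If F is a filter on a pretopological space (X, π), then adh_{rπ} F = adh_π F¹, where F¹ = {F ∈ F : inh_π F ∈ F} and rπ is the partial regularization of π. -/
open Set Filter

/-!
Everything rests on `inh Uᶜ = (adhS U)ᶜ`. If the `rπ`-vicinity `adhS U` misses some `B ∈ F`, then
`Uᶜ ⊇ inh Uᶜ ⊇ B` puts `Uᶜ` in `F¹`, so `U` is not a vicinity of a point of `adh_π F¹`. Conversely a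
point of `adhS U ∩ inh B` has a `π`-vicinity inside `B`, and that vicinity meets `U`.
-/

namespace Pretop

variable {X : Type*} (π : Pretop X)

lemma inh_compl (A : Set X) : π.inh Aᶜ = (π.adhS A)ᶜ := by
  rw [inh, compl_compl]

lemma mem_inh_iff {A : Set X} {x : X} : x ∈ π.inh A ↔ ∃ W ∈ π.V x, W ⊆ A := by
  simp only [inh, adhS, mem_compl_iff, mem_ofPred_eq, not_forall, exists_prop,
    inter_compl_nonempty_iff, not_not]

lemma inter_nonempty_of_mem_adhS_of_mem_inh {U B : Set X} {z : X} (hU : z ∈ π.adhS U)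
    (hB : z ∈ π.inh B) : (U ∩ B).Nonempty := by
  obtain ⟨W, hW, hWB⟩ := π.mem_inh_iff.mp hB
  obtain ⟨y, hyW, hyU⟩ := hU W hW
  exact ⟨y, hyU, hWB hyW⟩

lemma compl_mem_F1_of_compl_adhS_mem {F : Filter X} {U : Set X} (h : (π.adhS U)ᶜ ∈ F) :
    Uᶜ ∈ π.F1 F := by
  rw [← π.inh_compl] at h
  exact ⟨mem_of_superset h (π.inh_subset _), h⟩

lemma adh_rpre_subset_adh_F1 (F : Filter X) : (π.rpre).adh F ⊆ π.adh (π.F1 F) :=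
  fun _ hx U hU _ hB =>
    let ⟨_, hzU, hzB⟩ := hx _ (π.mem_rpre.mpr ⟨U, hU, subset_rfl⟩) _ (π.mem_F1.mp hB).2
    π.inter_nonempty_of_mem_adhS_of_mem_inh hzU hzB

lemma adh_F1_subset_adh_rpre (F : Filter X) : π.adh (π.F1 F) ⊆ (π.rpre).adh F := by
  intro x hx A hA B hB
  obtain ⟨U, hU, hUA⟩ := π.mem_rpre.mp hA
  suffices (π.adhS U ∩ B).Nonempty from this.mono (inter_subset_inter_left B hUA)
  by_contra hdisj
  have hUc : Uᶜ ∈ π.F1 F := π.compl_mem_F1_of_compl_adhS_mem <|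
    mem_of_superset hB fun y hyB hyU => hdisj ⟨y, hyU, hyB⟩
  obtain ⟨y, hyU, hyUc⟩ := hx U hU Uᶜ hUc
  exact hyUc hyU

end Pretop

/-- `adh_{rπ} F = adh_π F¹` for any filter `F` on a pretopological space. -/
theorem adh_rpre_eq_adh_F1 {X : Type*} (π : Pretop X) (F : Filter X) :
    (π.rpre).adh F = π.adh (π.F1 F) :=
  Subset.antisymm (π.adh_rpre_subset_adh_F1 F) (π.adh_F1_subset_adh_rpre F)
end

section
/- A function f : (X, π) → (Y, τ) between pretopological spaces is perfect if and only if f[adh_π F] ⊇ adh_τ f(F) for every filter F on X. -/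
open Set Filter

/-!
A filter `G` meets `f⁻(F)` exactly when `f(G)` meets `F`, so `y ∈ adh_τ f(G)` says that `G`
meets `f⁻(V_τ(y))`. Since `V_τ(y)` is the coarsest filter converging to `y`, perfectness only
has to be tested on it, and for it compactness at `f⁻(y)` is precisely the inclusion
`adh_τ f(G) ⊆ f[adh_π G]`.
-/

lemma meets_iff_neBot_inf {X : Type*} {F G : Filter X} : Meets F G ↔ (F ⊓ G).NeBot :=
  inf_neBot_iff.symm

lemma meets_comm {X : Type*} {F G : Filter X} : Meets F G ↔ Meets G F := by
  simp only [meets_iff_neBot_inf, inf_comm]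

lemma Meets.mono_right {X : Type*} {F G G' : Filter X} (h : Meets F G) (hG : G ≤ G') :
    Meets F G' :=
  fun A hA B hB => h A hA B (hG hB)

lemma meets_comap_iff_map_meets {X Y : Type*} {f : X → Y} {G : Filter X} {F : Filter Y} :
    Meets G (F.comap f) ↔ Meets (G.map f) F := by
  simp only [meets_iff_neBot_inf, neBot_inf_comap_iff_map]

lemma Pretop.mem_adh_map_iff {X Y : Type*} (τ : Pretop Y) {f : X → Y} {G : Filter X} {y : Y} :
    y ∈ τ.adh (G.map f) ↔ Meets G ((τ.V y).comap f) :=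
  meets_comm.trans meets_comap_iff_map_meets.symm

/-- A map between pretopological spaces is perfect iff `f[adh_π F] ⊇ adh_τ f(F)`
for every filter `F` on `X`. -/
theorem perfect_iff_adh_image {X Y : Type*} (π : Pretop X) (τ : Pretop Y) (f : X → Y) :
    PerfectPre π τ f ↔ ∀ F : Filter X, τ.adh (F.map f) ⊆ f '' π.adh F := by
  constructor
  · intro hperfect G y hy
    exact hperfect (τ.V y) y le_rfl G (τ.mem_adh_map_iff.1 hy)
  · intro hadh F y hFy G hG
    exact hadh G (τ.mem_adh_map_iff.2 (hG.mono_right (comap_mono hFy)))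
end

section
/- Let f : (X, π) → (Y, τ) be a map between pretopological spaces such that (a) f[adh_π A] ⊇ adh_τ f[A] for every A ⊆ X and (b) f⁻(y) is cover-compact for every y ∈ Y. Then f is perfect. -/
open Set Filter

/-! If `G` meets `f⁻(F)` with `F → y` but `adh G` misses the fiber `f⁻(y)`, cover-compactness
of the fiber gives `B ∈ G` with `adh B` still missing it. Since `G` meets `f⁻(F)`, `y` adheres
to `f[B]`, so by `f[adh B] ⊇ adh f[B]` some point of `adh B` lies over `y`. -/

namespace Pretop

variable {X Y : Type*} (π : Pretop X)

lemma exists_compl_mem_of_notMem_adh {G : Filter X} {x : X} (hx : x ∉ π.adh G) :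
    ∃ U, Uᶜ ∈ G ∧ U ∈ π.V x := by
  simp only [adh, Meets, mem_ofPred_eq, not_forall, not_nonempty_iff_eq_empty] at hx
  obtain ⟨W, hW, B, hB, hWB⟩ := hx
  refine ⟨Bᶜ, by rwa [compl_compl], mem_of_superset hW fun z hzW hzB => ?_⟩
  exact (eq_empty_iff_forall_notMem.mp hWB) z ⟨hzW, hzB⟩

variable {π}

lemma CoverCompact.exists_mem_disjoint_adhS {A : Set X} (hA : π.CoverCompact A)
    {G : Filter X} (hG : Disjoint (π.adh G) A) : ∃ B ∈ G, Disjoint (π.adhS B) A := by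
  have hcover : π.IsCover {U | Uᶜ ∈ G} A := fun x hx =>
    π.exists_compl_mem_of_notMem_adh (disjoint_right.mp hG hx)
  obtain ⟨D, hDC, hAD⟩ := hA _ hcover
  refine ⟨(⋃ U ∈ D, U)ᶜ, ?_, (subset_compl_iff_disjoint_right.mp hAD).symm⟩
  simp only [compl_iUnion]
  exact (biInter_finset_mem D).mpr hDC

lemma mem_adhS_image_of_meets_comap {τ : Pretop Y} {f : X → Y} {F : Filter Y} {y : Y}
    (hFy : τ.Conv F y) {G : Filter X} (hG : Meets G (F.comap f)) {B : Set X}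
    (hB : B ∈ G) : y ∈ τ.adhS (f '' B) := fun W hW =>
  let ⟨z, hzB, hzW⟩ := hG B hB (f ⁻¹' W) (preimage_mem_comap (hFy hW))
  ⟨f z, hzW, mem_image_of_mem f hzB⟩

end Pretop

/-- If `f[adh_π A] ⊇ adh_τ f[A]` for every set `A` and every fiber of `f` is
cover-compact, then `f` is perfect. -/
theorem perfect_of_adh_image_and_coverCompact_fibers {X Y : Type*}
    (π : Pretop X) (τ : Pretop Y) (f : X → Y)
    (ha : ∀ A : Set X, τ.adhS (f '' A) ⊆ f '' π.adhS A)
    (hb : ∀ y : Y, π.CoverCompact (f ⁻¹' {y})) :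
    PerfectPre π τ f := by
  intro F y hFy G hG
  by_contra hdisj
  rw [not_nonempty_iff_eq_empty, ← disjoint_iff_inter_eq_empty] at hdisj
  obtain ⟨B, hBG, hBy⟩ := (hb y).exists_mem_disjoint_adhS hdisj
  obtain ⟨x, hxB, hxy⟩ := ha B (Pretop.mem_adhS_image_of_meets_comap hFy hG hBG)
  exact disjoint_left.mp hBy hxB hxy
end

section
/- A Hausdorff topological space X is H-closed (every open filter on X has nonempty adherence) if and only if the pretopological space (X, θ) is compact, where θ is the convergence given by F →_θ x iff every closed neighborhood of x belongs to F (i.e., cl U ∈ F for every open U containing x). -/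
open Set Filter

/-!
For an open filter, the θ-adherence is the intersection of the closures of its members, since a
closed neighbourhood `closure N` meets an open set exactly when `N` does. An arbitrary proper filter
`F` has the same θ-adherence as its open coarsening `F.lift nhdsSet`, which is again proper.
-/

lemma Pretop.adh_mono {X : Type*} (π : Pretop X) {F G : Filter X} (h : F ≤ G) :
    π.adh F ⊆ π.adh G :=
  fun _ hx A hA B hB => hx A hA B (h hB)

section Theta

variable {X : Type*} [TopologicalSpace X]

lemma theta_mem_adh_iff {F : Filter X} {x : X} :
    x ∈ (theta X).adh F ↔ ∀ N ∈ nhds x, ∀ B ∈ F, (closure N ∩ B).Nonempty := by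
  refine ⟨fun hx N hN => hx _ (mem_lift' hN), fun hx A hA B hB => ?_⟩
  obtain ⟨N, hN, hNA⟩ := (mem_lift'_sets (monotone_closure X)).1 hA
  exact (hx N hN B hB).mono (inter_subset_inter_left B hNA)

lemma iInter_closure_subset_theta_adh (F : Filter X) :
    ⋂ A ∈ F, closure A ⊆ (theta X).adh F := by
  intro x hx
  simp only [mem_iInter, mem_closure_iff_nhds] at hx
  exact theta_mem_adh_iff.2 fun N hN B hB =>
    (hx B hB N hN).mono (inter_subset_inter_left B subset_closure)

lemma theta_adh_subset_iInter_closure {F : Filter X}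
    (hF : ∀ A ∈ F, ∃ U ∈ F, IsOpen U ∧ U ⊆ A) :
    (theta X).adh F ⊆ ⋂ A ∈ F, closure A := by
  intro x hx
  simp only [mem_iInter, mem_closure_iff_nhds]
  intro A hA N hN
  obtain ⟨U, hU, hUopen, hUA⟩ := hF A hA
  have hNU := (closure_inter_open_nonempty_iff hUopen).1 (theta_mem_adh_iff.1 hx N hN U hU)
  exact hNU.mono (inter_subset_inter_right N hUA)

lemma theta_adh_eq_iInter_closure {F : Filter X}
    (hF : ∀ A ∈ F, ∃ U ∈ F, IsOpen U ∧ U ⊆ A) :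
    (theta X).adh F = ⋂ A ∈ F, closure A :=
  (theta_adh_subset_iInter_closure hF).antisymm (iInter_closure_subset_theta_adh F)

lemma le_lift_nhdsSet (F : Filter X) : F ≤ F.lift nhdsSet :=
  le_lift.2 fun _ hA => (le_principal_iff.2 hA).trans principal_le_nhdsSet

lemma mem_lift_nhdsSet_iff {F : Filter X} {S : Set X} :
    S ∈ F.lift nhdsSet ↔ ∃ A ∈ F, ∃ U, IsOpen U ∧ A ⊆ U ∧ U ⊆ S := by
  simp only [mem_lift_sets monotone_nhdsSet, mem_nhdsSet_iff_exists]

lemma exists_isOpen_mem_lift_nhdsSet {F : Filter X} {S : Set X} (hS : S ∈ F.lift nhdsSet) :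
    ∃ U ∈ F.lift nhdsSet, IsOpen U ∧ U ⊆ S := by
  obtain ⟨A, hA, U, hUopen, hAU, hUS⟩ := mem_lift_nhdsSet_iff.1 hS
  exact ⟨U, mem_lift_nhdsSet_iff.2 ⟨A, hA, U, hUopen, hAU, subset_rfl⟩, hUopen, hUS⟩

/-- A closed neighbourhood of `x` missing a member `B` of `F` has open complement containing `B`,
so it also misses a member of the coarser filter `F.lift nhdsSet`. -/
lemma theta_adh_lift_nhdsSet (F : Filter X) :
    (theta X).adh (F.lift nhdsSet) = (theta X).adh F := by
  refine Subset.antisymm (fun x hx => ?_) ((theta X).adh_mono (le_lift_nhdsSet F))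
  refine theta_mem_adh_iff.2 fun N hN B hB => ?_
  by_contra hNB
  have hBsub : B ⊆ (closure N)ᶜ :=
    (disjoint_iff_inter_eq_empty.2 (not_nonempty_iff_eq_empty.1 hNB)).subset_compl_left
  have hmem : (closure N)ᶜ ∈ F.lift nhdsSet :=
    mem_lift_nhdsSet_iff.2 ⟨B, hB, _, isClosed_closure.isOpen_compl, hBsub, subset_rfl⟩
  simpa using theta_mem_adh_iff.1 hx N hN _ hmem

end Theta

theorem hClosed_iff_theta_compact_general {X : Type*} [TopologicalSpace X] :
    (∀ F : Filter X, F.NeBot → (∀ A ∈ F, ∃ U ∈ F, IsOpen U ∧ U ⊆ A) →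
      (⋂ A ∈ F, closure A).Nonempty) ↔ (theta X).IsCompactPre := by
  constructor
  · intro hH F hF
    have hG : (F.lift nhdsSet).NeBot := hF.mono (le_lift_nhdsSet F)
    have hGopen : ∀ S ∈ F.lift nhdsSet, ∃ U ∈ F.lift nhdsSet, IsOpen U ∧ U ⊆ S :=
      fun _ => exists_isOpen_mem_lift_nhdsSet
    rw [← theta_adh_lift_nhdsSet, theta_adh_eq_iInter_closure hGopen]
    exact hH _ hG hGopen
  · intro hC F hF hFopen
    exact theta_adh_eq_iInter_closure hFopen ▸ hC F hF

/-- A Hausdorff topological space is H-closed (every proper open filter has nonempty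
adherence) iff the pretopological space `(X, θ)` is compact. -/
theorem hClosed_iff_theta_compact {X : Type*} [TopologicalSpace X] [T2Space X] :
    (∀ F : Filter X, F.NeBot → (∀ A ∈ F, ∃ U ∈ F, IsOpen U ∧ U ⊆ A) →
      (⋂ A ∈ F, closure A).Nonempty) ↔ (theta X).IsCompactPre :=
  hClosed_iff_theta_compact_general
end

section
/- In Urysohn's example X = (ℕ × ℤ) ∪ {+∞, −∞} with the topology where basic neighborhoods of (n, m) for m ≠ 0 are singletons, basic neighborhoods of (n,0) are {(n,0)} ∪ {(n, ±m) : m > k}, and basic neighborhoods of +∞ (resp. −∞) are {±∞} ∪ {(n,m) : n > k, m > 0} (resp. m < 0): the set A = {(n, 0) : n ∈ ℕ} ∪ {+∞} is an H-set in X, but A with the subspace topology is homeomorphic to ℕ with the discrete topology and hence not H-closed. -/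
/-!
An open set `U ∋ +∞` contains `(n, m)` for all `m > 0` and all `n > k`, and every neighbourhood
of `(n, 0)` meets that half-column, so `closure U` contains all of `A` except the finitely many
points `(n, 0)` with `n ≤ k`; these are covered by finitely many further members of the cover.
On the other hand the column `{n} × ℤ` meets `A` only in `(n, 0)`, and `{+∞} ∪ B` meets `A` only
in `+∞`, so `A` is a countably infinite discrete subspace, which is never H-closed: closures in a
discrete space are trivial, so H-closed means compact.
-/

/-- The underlying set of Urysohn's example: `ℕ × ℤ` together with `+∞` and `-∞`. -/
inductive Ury where
  | pt : ℕ → ℤ → Ury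
  | pinf : Ury
  | ninf : Ury

namespace Ury

/-- Open sets in Urysohn's example. -/
def uryOpen (U : Set Ury) : Prop :=
  (pinf ∈ U → ∃ k : ℕ, ∀ n > k, ∀ m : ℤ, 0 < m → pt n m ∈ U) ∧
  (ninf ∈ U → ∃ k : ℕ, ∀ n > k, ∀ m : ℤ, m < 0 → pt n m ∈ U) ∧
  (∀ n : ℕ, pt n 0 ∈ U → ∃ k : ℕ, ∀ m : ℤ, (k : ℤ) < |m| → pt n m ∈ U)

instance : TopologicalSpace Ury where
  IsOpen := uryOpen
  isOpen_univ := ⟨fun _ => ⟨0, fun _ _ _ _ => trivial⟩, fun _ => ⟨0, fun _ _ _ _ => trivial⟩,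
    fun _ _ => ⟨0, fun _ _ => trivial⟩⟩
  isOpen_inter := by
    rintro U V ⟨hU1, hU2, hU3⟩ ⟨hV1, hV2, hV3⟩
    refine ⟨?_, ?_, ?_⟩
    · rintro ⟨h1, h2⟩
      obtain ⟨k1, hk1⟩ := hU1 h1
      obtain ⟨k2, hk2⟩ := hV1 h2
      exact ⟨max k1 k2, fun n hn m hm =>
        ⟨hk1 n (lt_of_le_of_lt (le_max_left _ _) hn) m hm,
         hk2 n (lt_of_le_of_lt (le_max_right _ _) hn) m hm⟩⟩
    · rintro ⟨h1, h2⟩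
      obtain ⟨k1, hk1⟩ := hU2 h1
      obtain ⟨k2, hk2⟩ := hV2 h2
      exact ⟨max k1 k2, fun n hn m hm =>
        ⟨hk1 n (lt_of_le_of_lt (le_max_left _ _) hn) m hm,
         hk2 n (lt_of_le_of_lt (le_max_right _ _) hn) m hm⟩⟩
    · rintro n ⟨h1, h2⟩
      obtain ⟨k1, hk1⟩ := hU3 n h1
      obtain ⟨k2, hk2⟩ := hV3 n h2
      refine ⟨max k1 k2, fun m hm => ?_⟩
      push_cast at hm
      exact ⟨hk1 m (lt_of_le_of_lt (by exact_mod_cast le_max_left k1 k2) hm),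
             hk2 m (lt_of_le_of_lt (by exact_mod_cast le_max_right k1 k2) hm)⟩
  isOpen_sUnion := by
    intro S hS
    refine ⟨?_, ?_, ?_⟩
    · rintro ⟨t, ht, hmem⟩
      obtain ⟨k, hk⟩ := (hS t ht).1 hmem
      exact ⟨k, fun n hn m hm => ⟨t, ht, hk n hn m hm⟩⟩
    · rintro ⟨t, ht, hmem⟩
      obtain ⟨k, hk⟩ := (hS t ht).2.1 hmem
      exact ⟨k, fun n hn m hm => ⟨t, ht, hk n hn m hm⟩⟩
    · rintro n ⟨t, ht, hmem⟩
      obtain ⟨k, hk⟩ := (hS t ht).2.2 n hmem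
      exact ⟨k, fun m hm => ⟨t, ht, hk m hm⟩⟩

/-- The H-set `A = {(n,0) : n ∈ ℕ} ∪ {+∞}`. -/
def A : Set Ury := {x | (∃ n : ℕ, x = pt n 0) ∨ x = pinf}

/-- `B = {(n,m) : m > 0}`. -/
def B : Set Ury := {x | ∃ n : ℕ, ∃ m : ℤ, 0 < m ∧ x = pt n m}

end Ury

open Set

section HClosed

variable {X : Type*} [TopologicalSpace X]

def IsHSet (s : Set X) : Prop :=
  ∀ C : Set (Set X), (∀ U ∈ C, IsOpen U) → s ⊆ ⋃₀ C →
    ∃ D : Finset (Set X), ↑D ⊆ C ∧ s ⊆ ⋃ U ∈ D, closure U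

variable (X) in
def HClosedSpace : Prop :=
  ∀ C : Set (Set X), (∀ U ∈ C, IsOpen U) → ⋃₀ C = univ →
    ∃ D : Finset (Set X), ↑D ⊆ C ∧ (⋃ U ∈ D, closure U) = univ

theorem IsCompact.exists_finset_subset_biUnion {K : Set X} (hK : IsCompact K)
    {C : Set (Set X)} (hC : ∀ U ∈ C, IsOpen U) (hKC : K ⊆ ⋃₀ C) :
    ∃ D : Finset (Set X), ↑D ⊆ C ∧ K ⊆ ⋃ U ∈ D, U := by
  rw [sUnion_eq_biUnion] at hKC
  obtain ⟨D, hDC, hD, hKD⟩ := hK.elim_finite_subcover_image (c := id) hC hKC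
  exact ⟨hD.toFinset, by simpa using hDC, by simpa using hKD⟩

theorem HClosedSpace.finite [DiscreteTopology X] (h : HClosedSpace X) : Finite X := by
  obtain ⟨D, hDC, hD⟩ := h (range singleton) (by rintro _ ⟨x, rfl⟩; exact isOpen_discrete _)
    (by rw [sUnion_range, iUnion_of_singleton])
  rw [← finite_univ_iff, ← hD]
  refine D.finite_toSet.biUnion fun U hU => ?_
  obtain ⟨x, rfl⟩ := hDC hU
  simp

end HClosed

namespace Ury

theorem isOpen_range_pt (n : ℕ) : IsOpen (range (pt n)) := by
  refine ⟨?_, ?_, ?_⟩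
  · rintro ⟨m, h⟩; cases h
  · rintro ⟨m, h⟩; cases h
  rintro n' ⟨m, h⟩
  cases h
  exact ⟨0, fun m _ => mem_range_self m⟩

theorem isOpen_insert_pinf_B : IsOpen (insert pinf B) := by
  refine ⟨fun _ => ⟨0, fun n _ m hm => Or.inr ⟨n, m, hm, rfl⟩⟩, ?_, ?_⟩
  · rintro (h | ⟨n, m, -, h⟩) <;> cases h
  · rintro n (h | ⟨n, m, hm, h⟩) <;> cases h
    exact absurd hm (lt_irrefl 0)

theorem pt_zero_mem_closure {U : Set Ury} {n : ℕ} (hU : ∀ m : ℤ, 0 < m → pt n m ∈ U) :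
    pt n 0 ∈ closure U := by
  refine mem_closure_iff.2 fun V hV hnV => ?_
  obtain ⟨k, hk⟩ := hV.2.2 n hnV
  have hpos : (0 : ℤ) < k + 1 := by positivity
  exact ⟨pt n (k + 1), hk _ (by rw [abs_of_pos hpos]; omega), hU _ hpos⟩

theorem isHSet_A : IsHSet A := by
  intro C hC hAC
  obtain ⟨U, hUC, hpinfU⟩ := hAC (Or.inr rfl : pinf ∈ A)
  obtain ⟨k, hk⟩ := (hC U hUC).1 hpinfU
  have hF : IsCompact ((fun n => pt n 0) '' Iic k) := ((finite_Iic k).image _).isCompact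
  obtain ⟨D, hDC, hFD⟩ := hF.exists_finset_subset_biUnion hC
    (by rintro _ ⟨n, -, rfl⟩; exact hAC (Or.inl ⟨n, rfl⟩))
  refine ⟨insert U D, by simpa [insert_subset_iff] using ⟨hUC, hDC⟩, ?_⟩
  rintro x (⟨n, rfl⟩ | rfl)
  · rcases le_or_gt n k with hn | hn
    · obtain ⟨V, hVD, hnV⟩ := mem_iUnion₂.1 (hFD ⟨n, hn, rfl⟩)
      exact mem_iUnion₂.2 ⟨V, Finset.mem_insert_of_mem hVD, subset_closure hnV⟩
    · exact mem_iUnion₂.2 ⟨U, Finset.mem_insert_self _ _, pt_zero_mem_closure (hk n hn)⟩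
  · exact mem_iUnion₂.2 ⟨U, Finset.mem_insert_self _ _, subset_closure hpinfU⟩

instance : DiscreteTopology A := by
  refine discreteTopology_subtype_iff'.2 ?_
  rintro x (⟨n, rfl⟩ | rfl)
  · refine ⟨range (pt n), isOpen_range_pt n, ?_⟩
    ext y
    constructor
    · rintro ⟨⟨m, rfl⟩, ⟨n', h⟩ | h⟩ <;> cases h
      rfl
    · rintro rfl
      exact ⟨mem_range_self 0, Or.inl ⟨n, rfl⟩⟩
  · refine ⟨insert pinf B, isOpen_insert_pinf_B, ?_⟩
    ext y
    constructor
    · rintro ⟨rfl | ⟨n, m, hm, rfl⟩, ⟨n', h⟩ | h⟩ <;> cases h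
      · rfl
      · exact absurd hm (lt_irrefl 0)
    · rintro rfl
      exact ⟨mem_insert _ _, Or.inr rfl⟩

theorem infinite_A : A.Infinite :=
  (infinite_range_of_injective fun _ _ h => (pt.inj h).1).mono
    (by rintro _ ⟨n, rfl⟩; exact Or.inl ⟨n, rfl⟩)

theorem countable_A : A.Countable :=
  ((countable_range fun n => pt n 0).insert pinf).mono
    (by rintro _ (⟨n, rfl⟩ | rfl) <;> simp)

theorem nonempty_homeomorph_nat_A : Nonempty (ℕ ≃ₜ A) := by
  obtain ⟨_⟩ := countable_infinite_iff_nonempty_denumerable.1 ⟨countable_A, infinite_A⟩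
  exact ⟨⟨(Denumerable.eqv A).symm, continuous_of_discreteTopology,
    continuous_of_discreteTopology⟩⟩

end Ury

open Ury in
/-- In Urysohn's example, `A = {(n,0)} ∪ {+∞}` is an H-set in `X`, `A` with the
subspace topology is homeomorphic to discrete `ℕ`, and `A` is not H-closed. -/
theorem ury_A_hSet_not_hClosed :
    (∀ C : Set (Set Ury), (∀ U ∈ C, IsOpen U) → Ury.A ⊆ ⋃₀ C →
      ∃ D : Finset (Set Ury), ↑D ⊆ C ∧ Ury.A ⊆ ⋃ U ∈ D, closure U) ∧
    Nonempty (ℕ ≃ₜ Ury.A) ∧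
    ¬ (∀ C : Set (Set Ury.A), (∀ U ∈ C, IsOpen U) → ⋃₀ C = Set.univ →
      ∃ D : Finset (Set Ury.A), ↑D ⊆ C ∧ (⋃ U ∈ D, closure U) = Set.univ) := by
  exact ⟨isHSet_A, nonempty_homeomorph_nat_A,
    fun h => infinite_A (finite_coe_iff.1 (HClosedSpace.finite h))⟩
end
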